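/- Let L_act, L, M be positive natural numbers with M ≤ L_act, let A be an L_act×L complex matrix (A : Matrix (Fin L_act) (Fin L) ℂ) with A.rank = L_act, and let σ : Fin M → Fin L_act be an injective function. Then the set of L×M complex matrices Z for which the M×M submatrix of A * Z formed by the rows indexed by σ fails to be invertible, i.e., {Z : Matrix (Fin L) (Fin M) ℂ | ¬ IsUnit ((A * Z).submatrix σ id)}, has Lebesgue measure (volume) zero. -/

import Mathlib

open MeasureTheory

noncomputable instance matrixMeasureSpace {n m : Type*} [Fintype n] [Fintype m] :
    MeasureSpace (Matrix n m ℂ) :=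
  inferInstanceAs (MeasureSpace (n → m → ℂ))

/-!
With `B = A.submatrix σ id`, the selected rows of `A * Z` form `B * Z`, and `det (B * Z)` is a
polynomial in the entries of `Z`. It is not the zero polynomial: `A` has full row rank, hence a
right inverse `C`, and `B * C.submatrix id σ = 1`. The zero set of a nonzero polynomial is null
for any product of atomless σ-finite measures, by induction on the number of variables and
Fubini: outside the null zero set of the leading coefficient in the first variable, each fibre
consists of the finitely many roots of a nonzero one-variable polynomial.
-/

namespace MvPolynomial

variable {K : Type*} [CommRing K] [MeasurableSpace K]

theorem measurable_eval [MeasurableAdd₂ K] [MeasurableMul₂ K] {ι : Type*}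
    (p : MvPolynomial ι K) : Measurable fun x : ι → K => eval x p := by
  induction p using MvPolynomial.induction_on with
  | C a => simp
  | add p q hp hq => simp only [map_add]; exact hp.add hq
  | mul_X p i hp => simp only [map_mul, eval_X]; exact hp.mul (measurable_pi_apply i)

variable [IsDomain K] [MeasurableSingletonClass K] [MeasurableAdd₂ K] [MeasurableMul₂ K]
  (μ : Measure K) [SigmaFinite μ] [NullSingletonClass μ]

theorem measure_pi_setOf_eval_eq_zero_fin :
    ∀ {n : ℕ} {p : MvPolynomial (Fin n) K}, p ≠ 0 →
      Measure.pi (fun _ => μ) {x : Fin n → K | eval x p = 0} = 0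
  | 0, p, hp => by
    obtain ⟨a, rfl⟩ := C_surjective (Fin 0) p
    simp_all
  | n + 1, p, hp => by
    set q := finSuccEquiv K n p
    have hq : q.leadingCoeff ≠ 0 := by simpa [q] using hp
    have hfiber : ∀ s : Fin n → K, eval s q.leadingCoeff ≠ 0 →
        μ {y | eval (Fin.cons y s : Fin (n + 1) → K) p = 0} = 0 := by
      intro s hs
      have hmap : q.map (eval s) ≠ 0 := fun h => hs <| by
        simpa using congrArg (Polynomial.coeff · q.natDegree) h
      simp_rw [eval_eq_eval_mv_eval']
      exact (Polynomial.finite_setOfPred_isRoot hmap).measure_zero μ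
    have hgood : ∀ᵐ s ∂Measure.pi (fun _ => μ), eval s q.leadingCoeff ≠ 0 := by
      simpa [ae_iff] using measure_pi_setOf_eval_eq_zero_fin hq
    have hmeas : MeasurableSet {x : Fin (n + 1) → K | eval x p = 0} :=
      measurable_eval p (measurableSet_singleton 0)
    rw [← (measurePreserving_piFinSuccAbove (fun _ => μ) 0).symm.measure_preimage_equiv,
      Measure.prod_apply_symm (hmeas.preimage (MeasurableEquiv.measurable _))]
    refine (lintegral_congr_ae ?_).trans lintegral_zero
    filter_upwards [hgood] with s hs
    simpa [Fin.insertNthEquiv, Fin.insertNth_zero'] using hfiber s hs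

theorem measure_pi_setOf_eval_eq_zero {ι : Type*} [Fintype ι] {p : MvPolynomial ι K}
    (hp : p ≠ 0) : Measure.pi (fun _ => μ) {x : ι → K | eval x p = 0} = 0 := by
  let e := Fintype.equivFin ι
  have hp' : rename e p ≠ 0 := (rename_injective e e.injective).ne_iff' (map_zero _) |>.mpr hp
  rw [← (measurePreserving_piCongrLeft (fun _ => μ) e.symm).measure_preimage_equiv]
  convert measure_pi_setOf_eval_eq_zero_fin μ hp' using 2
  ext x
  have : MeasurableEquiv.piCongrLeft (fun _ => K) e.symm x = x ∘ e := by
    ext i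
    simpa using MeasurableEquiv.piCongrLeft_apply_apply (β := fun _ => K) e.symm x (e i)
  simp [this, eval_rename]

end MvPolynomial

theorem MeasureTheory.measurePreserving_curry {ι κ X : Type*} [Fintype ι] [Fintype κ]
    [MeasurableSpace X] (μ : Measure X) [SigmaFinite μ] :
    MeasurePreserving (MeasurableEquiv.curry ι κ X) (Measure.pi fun _ => μ)
      (Measure.pi fun _ => Measure.pi fun _ => μ) := by
  let e := (MeasurableEquiv.curry ι κ X).symm
  refine MeasurePreserving.symm e ⟨e.measurable, ?_⟩
  refine (Measure.pi_eq fun s hs => ?_).symm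
  have : e ⁻¹' Set.univ.pi s
      = Set.univ.pi fun i => Set.univ.pi fun j => s (i, j) := by
    ext; simp [e, MeasurableEquiv.coe_curry_symm]
  rw [MeasurableEquiv.map_apply, this, Measure.pi_pi]
  simp_rw [Measure.pi_pi]
  exact (Fintype.prod_prod_type fun p : ι × κ => μ (s p)).symm

namespace Matrix

variable {m n : Type*} [Fintype m] [Fintype n]

theorem eval_det_map_C_mul_mvPolynomialX {R : Type*} [CommRing R] [DecidableEq m]
    (B : Matrix m n R) (x : n × m → R) :
    MvPolynomial.eval x (B.map (MvPolynomial.C (σ := n × m)) * mvPolynomialX n m R).det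
      = (B * of (Function.curry x)).det := by
  rw [RingHom.map_det]
  congr 1
  ext i j
  simp [mul_apply]

theorem volume_setOf_det_mul_eq_zero [DecidableEq m] (B : Matrix m n ℂ) {Z₀ : Matrix n m ℂ}
    (hZ₀ : (B * Z₀).det ≠ 0) : volume {Z : Matrix n m ℂ | (B * Z).det = 0} = 0 := by
  have hP : (B.map (MvPolynomial.C (σ := n × m)) * mvPolynomialX n m ℂ).det ≠ 0 := fun h =>
    hZ₀ <| (eval_det_map_C_mul_mvPolynomialX B (Function.uncurry Z₀)).symm.trans (by simp [h])
  calc volume {Z : Matrix n m ℂ | (B * Z).det = 0}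
      = Measure.pi (fun _ => volume)
          (MeasurableEquiv.curry n m ℂ ⁻¹' {Z : Matrix n m ℂ | (B * Z).det = 0}) :=
        ((measurePreserving_curry volume).measure_preimage_equiv _).symm
    _ = 0 := by
      convert MvPolynomial.measure_pi_setOf_eval_eq_zero volume hP using 2
      ext x
      exact iff_of_eq (congrArg (· = 0) (eval_det_map_C_mul_mvPolynomialX B x).symm)

theorem exists_mul_eq_one_of_rank_eq_card {K : Type*} [Field K] [DecidableEq m]
    (A : Matrix m n K) (hA : A.rank = Fintype.card m) : ∃ C : Matrix n m K, A * C = 1 := by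
  classical
  have hsurj : LinearMap.range A.mulVecLin = ⊤ :=
    Submodule.eq_top_of_finrank_eq (by rw [← rank, hA, Module.finrank_fintype_fun_eq_card])
  obtain ⟨g, hg⟩ := A.mulVecLin.exists_rightInverse_of_surjective hsurj
  refine ⟨LinearMap.toMatrix' g, toLin'.injective ?_⟩
  rwa [toLin'_mul, toLin'_toMatrix', toLin'_one, toLin'_apply']

end Matrix

theorem selected_rows_invertible_ae_general
    (L_act L M : ℕ)
    (A : Matrix (Fin L_act) (Fin L) ℂ) (hA : A.rank = L_act)
    (σ : Fin M → Fin L_act) (hσ : Function.Injective σ) :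
    volume {Z : Matrix (Fin L) (Fin M) ℂ | ¬ IsUnit ((A * Z).submatrix σ id)} = 0 := by
  obtain ⟨C, hC⟩ := A.exists_mul_eq_one_of_rank_eq_card (by simpa using hA)
  have hselect : ∀ Z : Matrix (Fin L) (Fin M) ℂ,
      (A * Z).submatrix σ id = A.submatrix σ id * Z :=
    fun Z => by simpa using A.submatrix_mul Z σ id id Function.bijective_id
  have hright : A.submatrix σ id * C.submatrix id σ = 1 := by
    rw [← A.submatrix_mul C σ id σ Function.bijective_id, hC, Matrix.submatrix_one σ hσ]
  simp_rw [hselect, Matrix.isUnit_iff_isUnit_det, isUnit_iff_ne_zero, not_not]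
  exact (A.submatrix σ id).volume_setOf_det_mul_eq_zero (Z₀ := C.submatrix id σ)
    (by simp [hright])

theorem selected_rows_invertible_ae
    (L_act L M : ℕ) (hLact : 0 < L_act) (hL : 0 < L) (hM : 0 < M) (hML : M ≤ L_act)
    (A : Matrix (Fin L_act) (Fin L) ℂ) (hA : A.rank = L_act)
    (σ : Fin M → Fin L_act) (hσ : Function.Injective σ) :
    volume {Z : Matrix (Fin L) (Fin M) ℂ | ¬ IsUnit ((A * Z).submatrix σ id)} = 0 :=
  selected_rows_invertible_ae_general L_act L M A hA σ hσ
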